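/- Let R be a Noetherian local ring and I an ideal generated by a regular sequence. Let g : Y → Spec R be the blowup of I and E the exceptional Cartier divisor. Then for every e ≥ 1, H^0(Y, O_Y(−eE)) = I^e. -/

import Mathlib

/-!
If `x₁, …, x_c` is a regular sequence generating `I`, it is quasi-regular: a form `F` of degree
`n` with `F(x) ∈ I^{n+1}` has all its coefficients in `I`, i.e. `gr_I R ≅ (R/I)[X₁, …, X_c]`.
This goes by induction on `c`, splitting off one variable `X₀ ↦ a` (with `a` regular modulo the
ideal `J` of the remaining elements), and an inner induction on `n`: writing `F = X₀ Q + P` with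
`F(x) = 0`, the relation `a Q(x) = -P(x') ∈ J^{n}` and the regularity of `a` on `R/J^n` put
`Q(x)` in `J^n`, after which the induction hypotheses handle `Q` and `P`.

Quasi-regularity makes each `x_i` a nonzerodivisor on `gr_I R`, so `x_i y ∈ I^{m+1}` forces
`y ∈ I^m`. Iterating, `x_i^n y ∈ I^{n+e}` forces `y ∈ I^e`, hence `(I^{n+e} : I^n) = I^e` for
every `n`: the Ratliff–Rush closure of `I^e` is `I^e`.
-/

open MvPolynomial Ideal Set RingTheory.Sequence

namespace Ideal

variable {R : Type*} [CommSemiring R]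

theorem mem_pow_of_forall_mem_pow_succ {I : Ideal R} {y : R}
    {m : ℕ} (h : ∀ k < m, y ∈ I ^ k → y ∈ I ^ (k + 1)) : y ∈ I ^ m := by
  induction m with
  | zero => rw [pow_zero, one_eq_top]; trivial
  | succ m ih => exact h m m.lt_succ_self (ih fun k hk => h k (hk.trans m.lt_succ_self))

theorem iSup_colon_pow_add_eq_pow {I : Ideal R} {a : R} {e : ℕ} (ha : a ∈ I)
    (h : ∀ n y, a ^ n * y ∈ I ^ (n + e) → y ∈ I ^ e) :
    (⨆ n : ℕ, (I ^ (n + e)).colon ((I ^ n : Ideal R) : Set R)) = I ^ e := by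
  refine le_antisymm (iSup_le fun n y hy => h n y ?_) ?_
  · simpa [mul_comm] using Submodule.mem_colon.1 hy _ (pow_mem_pow ha n)
  · exact le_iSup_of_le 0 fun y hy => by simpa using hy

end Ideal

namespace MvPolynomial

variable {R σ : Type*} [CommRing R]

lemma map_aeval_homogeneousSubmodule (x : σ → R) (n : ℕ) :
    (homogeneousSubmodule σ R n).map (aeval x).toLinearMap = span (range x) ^ n := by
  rw [← homogeneousSubmodule_one_pow, Submodule.map_pow, homogeneousSubmodule_one_eq_span_X,
    Submodule.map_span, ← range_comp]
  simp only [Function.comp_def, AlgHom.toLinearMap_apply, aeval_X]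

lemma IsHomogeneous.eval_mem_pow {F : MvPolynomial σ R} {n : ℕ} (hF : F.IsHomogeneous n)
    (x : σ → R) : eval x F ∈ span (range x) ^ n := by
  rw [← map_aeval_homogeneousSubmodule, ← coe_aeval_eq_eval]
  exact Submodule.mem_map_of_mem hF

lemma exists_isHomogeneous_eval_eq {x : σ → R} {n : ℕ} {z : R} (hz : z ∈ span (range x) ^ n) :
    ∃ G : MvPolynomial σ R, G.IsHomogeneous n ∧ eval x G = z := by
  rw [← map_aeval_homogeneousSubmodule] at hz
  obtain ⟨G, hG, rfl⟩ := hz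
  exact ⟨G, hG, by simp⟩

lemma IsHomogeneous.eval_mem_mul_pow {F : MvPolynomial σ R} {n : ℕ} {K : Ideal R}
    (hF : F.IsHomogeneous n) (hK : F ∈ K.map C) (x : σ → R) :
    eval x F ∈ K * span (range x) ^ n := by
  classical
  rw [F.as_sum, map_sum]
  refine sum_mem fun d hd => ?_
  have hd : d.degree = n := by
    rw [Finsupp.degree_eq_weight_one]; exact hF (mem_support_iff.mp hd)
  rw [← mul_one (coeff d F), ← C_mul_monomial, map_mul, eval_C]
  exact mul_mem_mul (mem_map_C_iff.1 hK d) ((isHomogeneous_monomial 1 hd).eval_mem_pow x)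

lemma exists_isHomogeneous_mem_map_C_eval_eq {x : σ → R} {n : ℕ} {K : Ideal R} {z : R}
    (hz : z ∈ K * span (range x) ^ n) :
    ∃ G : MvPolynomial σ R, G.IsHomogeneous n ∧ G ∈ K.map C ∧ eval x G = z := by
  refine Submodule.mul_induction_on hz (fun k hk y hy => ?_) (fun y z hy hz => ?_)
  · obtain ⟨G, hG, rfl⟩ := exists_isHomogeneous_eval_eq hy
    exact ⟨C k * G, hG.C_mul k, mul_mem_right _ _ (mem_map_of_mem C hk), by simp⟩
  · obtain ⟨G, hG, hGK, rfl⟩ := hy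
    obtain ⟨H, hH, hHK, rfl⟩ := hz
    exact ⟨G + H, hG.add hH, add_mem hGK hHK, map_add _ _ _⟩

lemma rename_mem_map_C {τ : Type*} {K : Ideal R} (f : σ → τ) {F : MvPolynomial σ R}
    (hF : F ∈ K.map C) : rename f F ∈ K.map C := by
  have h := mem_map_of_mem (rename f).toRingHom hF
  rwa [Ideal.map_map, show (rename f).toRingHom.comp C = C from RingHom.ext (rename_C f)] at h

lemma finSuccEquiv_rename_succ {n : ℕ} (P : MvPolynomial (Fin n) R) :
    finSuccEquiv R n (rename Fin.succ P) = Polynomial.C P := by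
  induction P using MvPolynomial.induction_on with
  | C r => simp [finSuccEquiv_apply]
  | add p q hp hq => simp [hp, hq]
  | mul_X p j hp => simp [hp, finSuccEquiv_X_succ]

lemma IsHomogeneous.of_X_mul {F : MvPolynomial σ R} {n : ℕ} {i : σ}
    (h : (X i * F).IsHomogeneous (n + 1)) : F.IsHomogeneous n := by
  intro d hd
  have := h (d := Finsupp.single i 1 + d) (by rwa [coeff_X_mul])
  simp only [map_add, Finsupp.weight_single, Pi.one_apply, smul_eq_mul, mul_one] at this
  omega

lemma IsHomogeneous.exists_eq_X_zero_mul_add_rename_succ {c n : ℕ}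
    {F : MvPolynomial (Fin (c + 1)) R} (hF : F.IsHomogeneous (n + 1)) :
    ∃ Q P, Q.IsHomogeneous n ∧ P.IsHomogeneous (n + 1) ∧ F = X 0 * Q + rename Fin.succ P := by
  set p := finSuccEquiv R c F
  have hP : (p.coeff 0).IsHomogeneous (n + 1) :=
    hF.finSuccEquiv_coeff_isHomogeneous 0 _ (zero_add _)
  have hF_eq : F = X 0 * (finSuccEquiv R c).symm p.divX + rename Fin.succ (p.coeff 0) := by
    apply (finSuccEquiv R c).injective
    rw [map_add, map_mul, finSuccEquiv_X_zero, AlgEquiv.apply_symm_apply,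
      finSuccEquiv_rename_succ, Polynomial.X_mul_divX_add]
  refine ⟨_, _, IsHomogeneous.of_X_mul (i := (0 : Fin (c + 1))) ?_, hP, hF_eq⟩
  rw [eq_sub_of_add_eq hF_eq.symm]
  exact hF.sub hP.rename_isHomogeneous

lemma mem_map_C_of_forall_eval_eq_zero {x : σ → R} {n : ℕ}
    (h : ∀ F : MvPolynomial σ R, F.IsHomogeneous n → eval x F = 0 →
      F ∈ (span (range x)).map C)
    {F : MvPolynomial σ R} (hF : F.IsHomogeneous n) (hFx : eval x F ∈ span (range x) ^ (n + 1)) :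
    F ∈ (span (range x)).map C := by
  obtain ⟨G, hG, hGI, hGx⟩ :=
    exists_isHomogeneous_mem_map_C_eval_eq (x := x) (K := span (range x)) (by rwa [← pow_succ'])
  simpa using add_mem (h (F - G) (hF.sub hG) (by rw [map_sub, hGx, sub_self])) hGI

end MvPolynomial

section QuasiRegular

variable {R σ : Type*} [CommRing R]

def IsQuasiRegularSequence (x : σ → R) : Prop :=
  ∀ ⦃n : ℕ⦄ ⦃F : MvPolynomial σ R⦄, F.IsHomogeneous n →
    eval x F ∈ span (range x) ^ (n + 1) → F ∈ (span (range x)).map C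

namespace IsQuasiRegularSequence

variable {x : σ → R}

theorem of_isEmpty [IsEmpty σ] (x : σ → R) : IsQuasiRegularSequence x := by
  intro n F _ hFx
  rw [range_eq_empty, span_empty, ← zero_eq_bot, zero_pow n.succ_ne_zero, zero_eq_bot,
    mem_bot, F.eq_C_of_isEmpty, eval_C] at hFx
  rw [F.eq_C_of_isEmpty, hFx, C_0]
  exact zero_mem _

theorem mem_pow_succ_of_mul_mem (hx : IsQuasiRegularSequence x) {a y : R} {k : ℕ}
    (ha : ∀ y, a * y ∈ span (range x) → y ∈ span (range x))
    (hy : y ∈ span (range x) ^ k) (hay : a * y ∈ span (range x) ^ (k + 1)) :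
    y ∈ span (range x) ^ (k + 1) := by
  obtain ⟨G, hG, rfl⟩ := exists_isHomogeneous_eval_eq hy
  have hCG := hx (hG.C_mul a) (by rwa [map_mul, eval_C])
  have hGI : G ∈ (span (range x)).map C :=
    mem_map_C_iff.2 fun d => ha _ (by simpa using mem_map_C_iff.1 hCG d)
  simpa [pow_succ'] using hG.eval_mem_mul_pow hGI x

theorem mem_pow_of_mul_mem (hx : IsQuasiRegularSequence x) {a y : R} {m : ℕ}
    (ha : ∀ y, a * y ∈ span (range x) → y ∈ span (range x))
    (hay : a * y ∈ span (range x) ^ m) : y ∈ span (range x) ^ m :=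
  mem_pow_of_forall_mem_pow_succ fun _ hk hy =>
    hx.mem_pow_succ_of_mul_mem ha hy (pow_le_pow_right hk hay)

theorem mem_map_C_of_eval_cons_eq_zero {c m : ℕ} {x : Fin c → R}
    (hx : IsQuasiRegularSequence x) {a : R}
    (ha : ∀ y, a * y ∈ span (range x) → y ∈ span (range x))
    (hm : ∀ ⦃Q : MvPolynomial (Fin (c + 1)) R⦄, Q.IsHomogeneous m →
      eval (Fin.cons a x) Q ∈ span (range (Fin.cons a x)) ^ (m + 1) →
        Q ∈ (span (range (Fin.cons a x : Fin (c + 1) → R))).map C)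
    {F : MvPolynomial (Fin (c + 1)) R} (hF : F.IsHomogeneous (m + 1))
    (hFx : eval (Fin.cons a x) F = 0) :
    F ∈ (span (range (Fin.cons a x : Fin (c + 1) → R))).map C := by
  have hI : span (range (Fin.cons a x : Fin (c + 1) → R)) = span {a} ⊔ span (range x) := by
    rw [Fin.range_cons, span_insert]
  set J := span (range x)
  set I := span (range (Fin.cons a x : Fin (c + 1) → R))
  have hJI : J ≤ I := hI ▸ le_sup_right
  have haI : a ∈ I := hI ▸ mem_sup_left (mem_span_singleton_self a)
  obtain ⟨Q, P, hQ, hP, rfl⟩ := hF.exists_eq_X_zero_mul_add_rename_succ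
  have hQP : a * eval (Fin.cons a x) Q + eval x P = 0 := by
    simpa [eval_rename, Function.comp_def] using hFx
  have hQJ : eval (Fin.cons a x) Q ∈ J ^ (m + 1) := by
    refine hx.mem_pow_of_mul_mem ha ?_
    rw [eq_neg_of_add_eq_zero_left hQP]
    exact neg_mem (hP.eval_mem_pow x)
  have hQI : Q ∈ I.map C := hm hQ (pow_right_mono hJI _ hQJ)
  obtain ⟨G, hG, hGx⟩ := exists_isHomogeneous_eval_eq hQJ
  have hPG : P + C a * G ∈ J.map C := by
    refine hx (hP.add (hG.C_mul a)) ?_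
    rw [map_add, map_mul, eval_C, hGx, add_comm (eval x P), hQP]
    exact zero_mem _
  have hPI : P ∈ I.map C := by
    rw [← add_sub_cancel_right P (C a * G)]
    exact sub_mem (map_mono hJI hPG) (mul_mem_right _ _ (mem_map_of_mem C haI))
  exact add_mem (mul_mem_left _ _ hQI) (rename_mem_map_C _ hPI)

theorem cons {c : ℕ} {x : Fin c → R} (hx : IsQuasiRegularSequence x) {a : R}
    (ha : ∀ y, a * y ∈ span (range x) → y ∈ span (range x)) :
    IsQuasiRegularSequence (Fin.cons a x : Fin (c + 1) → R) := by
  intro n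
  induction n with
  | zero =>
    intro _
    refine mem_map_C_of_forall_eval_eq_zero fun F hF hFx => ?_
    have hFC : F = C (coeff 0 F) :=
      totalDegree_eq_zero_iff_eq_C.1 ((totalDegree_zero_iff_isHomogeneous _).2 hF)
    rw [hFC, eval_C] at hFx
    rw [hFC, hFx, C_0]
    exact zero_mem _
  | succ m ih =>
    intro _
    exact mem_map_C_of_forall_eval_eq_zero fun F hF hFx =>
      hx.mem_map_C_of_eval_cons_eq_zero ha ih hF hFx

theorem mem_pow_succ_of_mul_mem_pow_add_two (hx : IsQuasiRegularSequence x) (i : σ) {y : R}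
    {k : ℕ} (hy : y ∈ span (range x) ^ k) (hxy : x i * y ∈ span (range x) ^ (k + 2)) :
    y ∈ span (range x) ^ (k + 1) := by
  obtain ⟨G, hG, rfl⟩ := exists_isHomogeneous_eval_eq hy
  have hXG : X i * G ∈ (span (range x)).map C :=
    hx (by simpa [add_comm] using (isHomogeneous_X R i).mul hG) (by rwa [map_mul, eval_X])
  have hGI : G ∈ (span (range x)).map C :=
    mem_map_C_iff.2 fun d => by
      have hd := mem_map_C_iff.1 hXG (Finsupp.single i 1 + d)
      rwa [coeff_X_mul] at hd
  simpa [pow_succ'] using hG.eval_mem_mul_pow hGI x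

theorem mem_pow_of_mul_mem_pow_succ (hx : IsQuasiRegularSequence x) (i : σ) {y : R} {m : ℕ}
    (hxy : x i * y ∈ span (range x) ^ (m + 1)) : y ∈ span (range x) ^ m :=
  mem_pow_of_forall_mem_pow_succ fun _ hk hy =>
    hx.mem_pow_succ_of_mul_mem_pow_add_two i hy (pow_le_pow_right (by omega) hxy)

theorem mem_pow_of_pow_mul_mem_pow_add (hx : IsQuasiRegularSequence x) (i : σ) {e : ℕ} :
    ∀ {n : ℕ} {y : R}, x i ^ n * y ∈ span (range x) ^ (n + e) → y ∈ span (range x) ^ e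
  | 0, y, h => by simpa using h
  | n + 1, y, h => hx.mem_pow_of_pow_mul_mem_pow_add i <| hx.mem_pow_of_mul_mem_pow_succ i <| by
      rwa [← mul_assoc, ← pow_succ', Nat.add_right_comm]

end IsQuasiRegularSequence

/-- `cons` splits off the first variable, so it must be the last element of the regular
sequence: hence the reversal. -/
theorem isQuasiRegularSequence_of_isWeaklyRegular_reverse :
    ∀ {c : ℕ} (x : Fin c → R), IsWeaklyRegular R (List.ofFn x).reverse →
      IsQuasiRegularSequence x
  | 0, x, _ => .of_isEmpty x
  | c + 1, x, hx => by
    rw [List.ofFn_succ, List.reverse_cons, isWeaklyRegular_append_iff,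
      isWeaklyRegular_singleton_iff] at hx
    obtain ⟨hx, ha⟩ := hx
    have hJ : (ofList (List.ofFn fun i => x i.succ).reverse • ⊤ : Submodule R R) =
        span (range (Fin.tail x)) := by
      rw [smul_eq_mul, mul_top, ofList]
      congr
      ext; simp [Fin.tail]
    rw [hJ, isSMulRegular_quotient_iff_mem_of_smul_mem] at ha
    rw [← Fin.cons_self_tail x]
    exact (isQuasiRegularSequence_of_isWeaklyRegular_reverse _ hx).cons ha

end QuasiRegular

theorem stmt11_general {R : Type*} [CommRing R]
    (I : Ideal R) (hne : I ≠ ⊥)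
    (as : List R) (hreg : RingTheory.Sequence.IsRegular R as) (hI : I = Ideal.ofList as)
    (e : ℕ) :
    (⨆ n : ℕ, (I ^ (n + e)).colon ((I ^ n : Ideal R) : Set R)) = I ^ e := by
  set x : Fin as.reverse.length → R := as.reverse.get
  have hIx : I = span (range x) := by
    rw [hI, ofList]
    congr
    ext r
    rw [← List.mem_reverse, List.mem_iff_get]
  obtain ⟨i⟩ : Nonempty (Fin as.reverse.length) := by
    refine ⟨⟨0, List.length_pos_iff.2 fun h => hne ?_⟩⟩
    rw [hI, List.reverse_eq_nil_iff.1 h, ofList_nil]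
  have hx : IsQuasiRegularSequence x :=
    isQuasiRegularSequence_of_isWeaklyRegular_reverse x (by
      rw [List.ofFn_get, List.reverse_reverse]; exact hreg.toIsWeaklyRegular)
  rw [hIx]
  exact iSup_colon_pow_add_eq_pow (subset_span ⟨i, rfl⟩) fun n y =>
    hx.mem_pow_of_pow_mul_mem_pow_add i

theorem stmt11 {R : Type*} [CommRing R] [IsNoetherianRing R] [IsLocalRing R]
    (I : Ideal R) (hprime : I.IsPrime) (hne : I ≠ ⊥)
    (as : List R) (hreg : RingTheory.Sequence.IsRegular R as) (hI : I = Ideal.ofList as)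
    (e : ℕ) (he : 0 < e) :
    (⨆ n : ℕ, (I ^ (n + e)).colon ((I ^ n : Ideal R) : Set R)) = I ^ e :=
  stmt11_general I hne as hreg hI e
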